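/- Let X be a compact Hausdorff space, f : ℕ → X a function, and let {a_α : α < ω₁} be an almost disjoint family of infinite subsets of ℕ with the Luzin property: for every α < ω₁ and every n ∈ ℕ the set {β < α : a_β ∩ a_α ⊆ {0, 1, …, n−1}} is finite. Suppose for each α < ω₁ there is a point y_α ∈ X such that for every neighbourhood U of y_α the set {k ∈ a_α : f(k) ∉ U} is finite. Then there is a point x ∈ X such that the ω₁-sequence ⟨y_α : α < ω₁⟩ converges to x. -/

import Mathlib

open Ordinal Topology

/-- The first uncountable ordinal `ω₁`, as a (well-ordered) type. -/
abbrev Omega1 : Type := Ordinal.ToType (Ordinal.omega 1)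

/-- An `ω₁`-sequence converges to `p` if every neighbourhood of `p`
contains a tail of the sequence. -/
def ConvergesTo {X : Type*} [TopologicalSpace X] (x : Omega1 → X) (p : X) : Prop :=
  ∀ U ∈ nhds p, ∃ α : Omega1, ∀ β : Omega1, α ≤ β → x β ∈ U

/-!
In a compact space the `ω₁`-sequence `y` has a cluster point, so it suffices that it has only one.
Along `atTop` on `ω₁`, "frequently" means "on an uncountable set", because countable subsets of
`ω₁` are bounded. If `p ≠ q` were cluster points, separate them by disjoint open `U`, `V`: uncountably
many `y_α` lie in `U`, and `W = f⁻¹(U)` almost contains those `a_α`; uncountably many `y_β` lie in `V`,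
and `W` is almost disjoint from those `a_β`. Pigeonhole makes "almost" uniform, below some `n`, on
uncountable subfamilies `A`, `B`. An `α ∈ A` above infinitely many `β ∈ B` then has
`a_β ∩ a_α ⊆ n` for all of them, against the Luzin property.
-/

open Set Filter Cardinal

namespace Omega1

instance : Nonempty Omega1 :=
  nonempty_toType_iff.2 (omega_pos 1).ne'

instance : NoMaxOrder Omega1 :=
  isSuccPrelimit_type_lt_iff.1 <| by simpa using (isSuccLimit_omega 1).isSuccPrelimit

theorem countable_Iio (α : Omega1) : (Iio α).Countable := by
  rw [← countable_coe_iff, ← mk_le_aleph0_iff, ← Order.lt_succ_iff, succ_aleph0]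
  simpa using mk_Iio_lt α (by simp [ord_aleph])

theorem countable_iff_bddAbove {S : Set Omega1} : S.Countable ↔ BddAbove S := by
  refine ⟨fun hS => ?_, fun ⟨γ, hγ⟩ => ?_⟩
  · rw [← not_isCofinal_iff_bddAbove]
    intro hcof
    have : ℵ₁ ≤ #S := by simpa using Order.cof_le hcof
    exact (le_aleph0_iff_set_countable.2 hS).not_gt (aleph0_lt_aleph_one.trans_le this)
  · exact ((countable_Iio γ).insert γ).mono fun β hβ => (hγ hβ).eq_or_lt

theorem frequently_atTop_iff {p : Omega1 → Prop} :
    (∃ᶠ α in atTop, p α) ↔ ¬ {α | p α}.Countable := by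
  simp only [frequently_atTop', countable_iff_bddAbove, not_bddAbove_iff, mem_ofPred_eq]
  exact forall_congr' fun _ => by simp only [gt_iff_lt, and_comm]

end Omega1

theorem convergesTo_iff_tendsto {X : Type*} [TopologicalSpace X] {y : Omega1 → X} {p : X} :
    ConvergesTo y p ↔ Tendsto y atTop (𝓝 p) :=
  tendsto_atTop'.symm

theorem Set.Finite.exists_subset_Iio {s : Set ℕ} (hs : s.Finite) : ∃ n, s ⊆ Iio n := by
  obtain ⟨m, hm⟩ := hs.bddAbove
  exact ⟨m + 1, fun k hk => Nat.lt_succ_of_le (hm hk)⟩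

theorem exists_not_countable_subset_Iio {ι : Type*} {S : Set ι} (hS : ¬ S.Countable)
    {s : ι → Set ℕ} (hs : ∀ i ∈ S, (s i).Finite) :
    ∃ n, ¬ {i ∈ S | s i ⊆ Iio n}.Countable := by
  by_contra! h
  refine hS ((countable_iUnion h).mono fun i hi => mem_iUnion.2 ?_)
  obtain ⟨n, hn⟩ := (hs i hi).exists_subset_Iio
  exact ⟨n, hi, hn⟩

def IsLuzin (a : Omega1 → Set ℕ) : Prop :=
  ∀ (α : Omega1) (n : ℕ), {β : Omega1 | β < α ∧ a β ∩ a α ⊆ Iio n}.Finite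

theorem IsLuzin.countable_or_countable_of_separated {a : Omega1 → Set ℕ} (ha : IsLuzin a)
    {A B : Set Omega1} {W : Set ℕ} (hA : ∀ α ∈ A, (a α \ W).Finite)
    (hB : ∀ β ∈ B, (a β ∩ W).Finite) : A.Countable ∨ B.Countable := by
  by_contra! ⟨hAunc, hBunc⟩
  obtain ⟨n₀, hn₀⟩ := exists_not_countable_subset_Iio hAunc hA
  obtain ⟨n₁, hn₁⟩ := exists_not_countable_subset_Iio hBunc hB
  obtain ⟨T, hTB, hTc, hTinf⟩ :=
    Infinite.exists_subset_countable_infinite fun hfin => hn₁ hfin.countable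
  obtain ⟨γ, hγ⟩ := Omega1.countable_iff_bddAbove.1 hTc
  obtain ⟨α, ⟨-, hαW⟩, hγα⟩ := not_bddAbove_iff.1 (mt Omega1.countable_iff_bddAbove.2 hn₀) γ
  refine hTinf ((ha α (max n₀ n₁)).subset fun β hβ => ⟨(hγ hβ).trans_lt hγα, ?_⟩)
  rintro k ⟨hkβ, hkα⟩
  by_cases hkW : k ∈ W
  · exact Iio_subset_Iio (le_max_right _ _) ((hTB hβ).2 ⟨hkβ, hkW⟩)
  · exact Iio_subset_Iio (le_max_left _ _) (hαW ⟨hkα, hkW⟩)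

theorem IsLuzin.mapClusterPt_unique {X : Type*} [TopologicalSpace X] [T2Space X]
    {a : Omega1 → Set ℕ} (ha : IsLuzin a) {f : ℕ → X} {y : Omega1 → X}
    (hy : ∀ α, ∀ U ∈ 𝓝 (y α), {k ∈ a α | f k ∉ U}.Finite) {p q : X}
    (hp : MapClusterPt p atTop y) (hq : MapClusterPt q atTop y) : p = q := by
  by_contra hpq
  obtain ⟨U, V, hU, hV, hpU, hqV, hUV⟩ := t2_separation hpq
  have hAunc : ¬ {α | y α ∈ U}.Countable :=
    Omega1.frequently_atTop_iff.1 (hp.frequently (hU.mem_nhds hpU))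
  have hBunc : ¬ {β | y β ∈ V}.Countable :=
    Omega1.frequently_atTop_iff.1 (hq.frequently (hV.mem_nhds hqV))
  refine (ha.countable_or_countable_of_separated (W := f ⁻¹' U) ?_ ?_).elim hAunc hBunc
  · exact fun α hα => (hy α U (hU.mem_nhds hα)).subset fun k hk => hk
  · exact fun β hβ => (hy β V (hV.mem_nhds hβ)).subset fun k hk =>
      ⟨hk.1, fun hkV => hUV.ne_of_mem hk.2 hkV rfl⟩

theorem stmt12_general {X : Type*} [TopologicalSpace X] [CompactSpace X] [T2Space X]
    (f : ℕ → X) (a : Omega1 → Set ℕ)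
    (hLuzin : ∀ (α : Omega1) (n : ℕ),
      Set.Finite {β : Omega1 | β < α ∧ a β ∩ a α ⊆ Set.Iio n})
    (y : Omega1 → X)
    (hy : ∀ α, ∀ U ∈ nhds (y α), Set.Finite {k ∈ a α | f k ∉ U}) :
    ∃ x : X, ConvergesTo y x := by
  obtain ⟨x, -, hx⟩ := isCompact_univ.exists_mapClusterPt (f := atTop) (u := y) (by simp)
  refine ⟨x, convergesTo_iff_tendsto.2 (tendsto_nhds_of_unique_mapClusterPt fun p hp => ?_)⟩
  exact IsLuzin.mapClusterPt_unique hLuzin hy hp hx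

/-- Given a Luzin almost disjoint family `⟨a_α : α < ω₁⟩` of infinite subsets of `ℕ`,
a map `f : ℕ → X` into a compact Hausdorff space, and points `y_α` to which the images
`f[a_α]` converge, the sequence `⟨y_α : α < ω₁⟩` converges. -/
theorem stmt12 {X : Type*} [TopologicalSpace X] [CompactSpace X] [T2Space X]
    (f : ℕ → X) (a : Omega1 → Set ℕ)
    (hinf : ∀ α, (a α).Infinite)
    (had : ∀ α β : Omega1, α ≠ β → (a α ∩ a β).Finite)
    (hLuzin : ∀ (α : Omega1) (n : ℕ),
      Set.Finite {β : Omega1 | β < α ∧ a β ∩ a α ⊆ Set.Iio n})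
    (y : Omega1 → X)
    (hy : ∀ α, ∀ U ∈ nhds (y α), Set.Finite {k ∈ a α | f k ∉ U}) :
    ∃ x : X, ConvergesTo y x :=
  stmt12_general f a hLuzin y hy
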